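/- Let H be a real Hilbert space with inner product ⟨·,·⟩ and norm ‖·‖, and let q ≥ 1 be an integer. There exists a constant C > 0 depending only on q with the following property: for all a < b, every continuous function v : [a,b] → H, and every H-valued polynomial p of degree at most q satisfying p(a) = v(a), p(b) = v(b), and ∫_a^b ⟨v(t) − p(t), w(t)⟩ dt = 0 for every H-valued polynomial w of degree at most q − 2 (this orthogonality condition is vacuous when q = 1), one has sup_{t ∈ [a,b]} ‖p(t)‖ ≤ C sup_{t ∈ [a,b]} ‖v(t)‖. -/

import Mathlib

/-!
Pairing with a unit vector `e` that norms `p t` reduces the claim to the real function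
`f = ⟪e, v⟫` and the real polynomial `P = ⟪e, p⟫`, which interpolates `f` at `a` and `b`, with
`f - P` orthogonal to all polynomials of degree `< q - 1`. An affine change of variables moves
the problem to `[0, 1]`. There a polynomial of degree `≤ q` is determined by its values at `0`,
`1` and its moments against `s ^ k`, `k < q - 1`: if these all vanish then `P = X (X - 1) R` with
`deg R < q - 1`, and `∫₀¹ P R = -∫₀¹ s (1 - s) R² < 0` unless `R = 0`. This injective linear map
on a finite-dimensional space has a bounded inverse, and the degrees of freedom of `P` are those
of `f`, hence bounded by `sup |f|`.
-/

open MeasureTheory Set RealInnerProductSpace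

/-- An `H`-valued polynomial of degree at most `q`:
`t ↦ ∑_{i=0}^{q} t^i • c i` with coefficients `c i ∈ H`. -/
def IsPolyDegLE (H : Type*) [AddCommGroup H] [Module ℝ H] (q : ℕ) (f : ℝ → H) : Prop :=
  ∃ c : Fin (q + 1) → H, ∀ t : ℝ, f t = ∑ i : Fin (q + 1), t ^ (i : ℕ) • c i

/-- An `H`-valued polynomial of degree at most `n - 1` (i.e. with `n` coefficients);
for `n = 0` only the zero polynomial qualifies, so conditions quantified over such
polynomials are vacuous. -/
def IsPolyDegLT (H : Type*) [AddCommGroup H] [Module ℝ H] (n : ℕ) (f : ℝ → H) : Prop :=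
  ∃ c : Fin n → H, ∀ t : ℝ, f t = ∑ i : Fin n, t ^ (i : ℕ) • c i


open Polynomial

namespace Polynomial

theorem comp_mem_degreeLT {R : Type*} [Semiring R] {n : ℕ} {P Q : R[X]}
    (hP : P ∈ degreeLT R n) (hQ : Q.natDegree ≤ 1) : P.comp Q ∈ degreeLT R n := by
  rcases eq_or_ne P 0 with rfl | hP0
  · simp
  rw [mem_degreeLT, ← natDegree_lt_iff_degree_lt hP0] at hP
  rw [mem_degreeLT]
  calc (P.comp Q).degree ≤ (P.comp Q).natDegree := degree_le_natDegree
    _ ≤ (P.natDegree * Q.natDegree : ℕ) := by exact_mod_cast natDegree_comp_le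
    _ < n := by exact_mod_cast (mul_le_of_le_one_right' hQ).trans_lt hP

theorem abs_eval_le_of_mem_degreeLT {n : ℕ} {P : ℝ[X]} (hP : P ∈ degreeLT ℝ n) {s : ℝ}
    (hs : |s| ≤ 1) : |P.eval s| ≤ n * ‖degreeLTEquiv ℝ n ⟨P, hP⟩‖ := by
  rw [eval_eq_sum_degreeLTEquiv hP]
  calc |∑ i, degreeLTEquiv ℝ n ⟨P, hP⟩ i * s ^ (i : ℕ)|
      ≤ ∑ i, |degreeLTEquiv ℝ n ⟨P, hP⟩ i * s ^ (i : ℕ)| := Finset.abs_sum_le_sum_abs _ _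
    _ ≤ ∑ _i : Fin n, ‖degreeLTEquiv ℝ n ⟨P, hP⟩‖ := by
      gcongr with i
      rw [abs_mul, abs_pow]
      exact mul_le_of_le_one_right (abs_nonneg _) (pow_le_one₀ (abs_nonneg s) hs) |>.trans
        (norm_le_pi_norm (degreeLTEquiv ℝ n ⟨P, hP⟩) i)
    _ = n * ‖degreeLTEquiv ℝ n ⟨P, hP⟩‖ := by simp

theorem integral_mul_eval_eq_zero_of_moments {f : ℝ → ℝ} {a b : ℝ} (hf : Continuous f) {n : ℕ}
    (hmom : ∀ k < n, ∫ t in a..b, f t * t ^ k = 0) {R : ℝ[X]} (hR : R ∈ degreeLT ℝ n) :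
    ∫ t in a..b, f t * R.eval t = 0 := by
  simp_rw [eval_eq_sum_degreeLTEquiv hR, Finset.mul_sum, mul_left_comm (f _)]
  rw [intervalIntegral.integral_finsetSum fun i _ =>
    (by fun_prop : Continuous _).intervalIntegrable _ _]
  simp [intervalIntegral.integral_const_mul, hmom]

theorem integral_mul_one_sub_mul_eval_sq_pos {R : ℝ[X]} (hR : R ≠ 0) :
    0 < ∫ s in (0 : ℝ)..1, s * (1 - s) * R.eval s ^ 2 := by
  obtain ⟨s₀, hs₀, hRs₀⟩ : (Ioo (0 : ℝ) 1 \ {x | R.IsRoot x}).Nonempty :=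
    ((Ioo_infinite zero_lt_one).sdiff (R.finite_setOfPred_isRoot hR)).nonempty
  refine intervalIntegral.integral_pos zero_lt_one (by fun_prop) (fun s hs => ?_)
    ⟨s₀, Ioo_subset_Icc_self hs₀, ?_⟩
  · exact mul_nonneg (mul_nonneg hs.1.le (by linarith [hs.2])) (sq_nonneg _)
  · exact mul_pos (mul_pos hs₀.1 (by linarith [hs₀.2])) (pow_two_pos_of_ne_zero hRs₀)

end Polynomial

theorem eq_zero_of_eval_zero_of_eval_one_of_orthogonal {q : ℕ} {P : ℝ[X]}
    (hP : P ∈ degreeLT ℝ (q + 1)) (h0 : P.eval 0 = 0) (h1 : P.eval 1 = 0)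
    (horth : ∀ R ∈ degreeLT ℝ (q - 1), ∫ s in (0 : ℝ)..1, P.eval s * R.eval s = 0) : P = 0 := by
  obtain ⟨Q, rfl⟩ : X ∣ P := X_dvd_iff.mpr (by rwa [coeff_zero_eq_eval_zero])
  obtain ⟨R, rfl⟩ : X - C 1 ∣ Q := dvd_iff_isRoot.mpr (by simpa using h1)
  by_contra hP0
  have hR0 : R ≠ 0 := by rintro rfl; simp at hP0
  have hdeg : (X * ((X - C 1) * R)).natDegree = R.natDegree + 2 := by
    rw [natDegree_mul X_ne_zero (mul_ne_zero (X_sub_C_ne_zero 1) hR0),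
      natDegree_mul (X_sub_C_ne_zero 1) hR0, natDegree_X, natDegree_X_sub_C]
    ring
  rw [mem_degreeLT, ← natDegree_lt_iff_degree_lt hP0, hdeg] at hP
  have hRdeg : R ∈ degreeLT ℝ (q - 1) := by
    rw [mem_degreeLT, ← natDegree_lt_iff_degree_lt hR0]
    omega
  have hneg : ∫ s in (0 : ℝ)..1, (X * ((X - C 1) * R)).eval s * R.eval s
      = -∫ s in (0 : ℝ)..1, s * (1 - s) * R.eval s ^ 2 := by
    rw [← intervalIntegral.integral_neg]
    congr with s
    simp only [eval_mul, eval_X, eval_sub, eval_C]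
    ring
  have := integral_mul_one_sub_mul_eval_sq_pos hR0
  linarith [horth R hRdeg]

noncomputable def unitMoment (k : ℕ) : ℝ[X] →ₗ[ℝ] ℝ where
  toFun P := ∫ s in (0 : ℝ)..1, P.eval s * s ^ k
  map_add' P Q := by
    simp only [eval_add, add_mul]
    exact intervalIntegral.integral_add ((by fun_prop : Continuous _).intervalIntegrable _ _)
      ((by fun_prop : Continuous _).intervalIntegrable _ _)
  map_smul' r P := by
    simp only [eval_smul, smul_eq_mul, mul_assoc, intervalIntegral.integral_const_mul,
      RingHom.id_apply]

noncomputable def azizMonkDofs (q : ℕ) : ℝ[X] →ₗ[ℝ] ℝ × ℝ × (Fin (q - 1) → ℝ) :=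
  (leval 0).prod ((leval 1).prod (LinearMap.pi fun k => unitMoment k))

theorem azizMonkDofs_apply (q : ℕ) (P : ℝ[X]) :
    azizMonkDofs q P =
      (P.eval 0, P.eval 1, fun k : Fin (q - 1) => ∫ s in (0 : ℝ)..1, P.eval s * s ^ (k : ℕ)) :=
  rfl

theorem eq_zero_of_azizMonkDofs_eq_zero {q : ℕ} {P : ℝ[X]} (hP : P ∈ degreeLT ℝ (q + 1))
    (h : azizMonkDofs q P = 0) : P = 0 := by
  simp only [azizMonkDofs_apply, Prod.mk_eq_zero, funext_iff, Pi.zero_apply] at h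
  obtain ⟨h0, h1, hmom⟩ := h
  exact eq_zero_of_eval_zero_of_eval_one_of_orthogonal hP h0 h1 fun R hR =>
    integral_mul_eval_eq_zero_of_moments P.continuous (fun k hk => hmom ⟨k, hk⟩) hR

theorem exists_abs_eval_le_mul_norm_azizMonkDofs (q : ℕ) :
    ∃ K > 0, ∀ P ∈ degreeLT ℝ (q + 1), ∀ s ∈ Icc (0 : ℝ) 1,
      |P.eval s| ≤ K * ‖azizMonkDofs q P‖ := by
  set D := azizMonkDofs q ∘ₗ (degreeLT ℝ (q + 1)).subtype ∘ₗ
    (degreeLTEquiv ℝ (q + 1)).symm.toLinearMap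
  have hD : LinearMap.ker D = ⊥ := LinearMap.ker_eq_bot'.mpr fun c hc =>
    (degreeLTEquiv ℝ (q + 1)).symm.map_eq_zero_iff.mp <| Subtype.ext <|
      eq_zero_of_azizMonkDofs_eq_zero (Submodule.coe_mem _) hc
  obtain ⟨K, hK, hanti⟩ := D.exists_antilipschitzWith hD
  refine ⟨(q + 1) * K, by positivity, fun P hP s hs => ?_⟩
  have hc := ZeroHomClass.bound_of_antilipschitz D hanti (degreeLTEquiv ℝ (q + 1) ⟨P, hP⟩)
  simp only [D, LinearMap.coe_comp, Function.comp_apply, LinearEquiv.coe_coe,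
    LinearEquiv.symm_apply_apply, Submodule.subtype_apply] at hc
  calc |P.eval s| ≤ (q + 1 : ℕ) * ‖degreeLTEquiv ℝ (q + 1) ⟨P, hP⟩‖ :=
        abs_eval_le_of_mem_degreeLT hP (abs_le.mpr ⟨by linarith [hs.1], hs.2⟩)
    _ ≤ (q + 1) * (K * ‖azizMonkDofs q P‖) := by push_cast; gcongr
    _ = (q + 1) * K * ‖azizMonkDofs q P‖ := by ring

theorem norm_azizMonkDofs_le {q : ℕ} {g : ℝ → ℝ} (hg : ContinuousOn g (Icc 0 1)) {M : ℝ}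
    (hM : ∀ s ∈ Icc (0 : ℝ) 1, |g s| ≤ M) {Q : ℝ[X]} (h0 : Q.eval 0 = g 0) (h1 : Q.eval 1 = g 1)
    (horth : ∀ R ∈ degreeLT ℝ (q - 1), ∫ s in (0 : ℝ)..1, (g s - Q.eval s) * R.eval s = 0) :
    ‖azizMonkDofs q Q‖ ≤ M := by
  have hM0 : 0 ≤ M := (abs_nonneg _).trans (hM 0 ⟨le_rfl, zero_le_one⟩)
  simp only [azizMonkDofs_apply, norm_prod_le_iff, pi_norm_le_iff_of_nonneg hM0, h0, h1,
    Real.norm_eq_abs]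
  refine ⟨hM 0 ⟨le_rfl, zero_le_one⟩, hM 1 ⟨zero_le_one, le_rfl⟩, fun k => ?_⟩
  have hmoment :
      ∫ s in (0 : ℝ)..1, Q.eval s * s ^ (k : ℕ) = ∫ s in (0 : ℝ)..1, g s * s ^ (k : ℕ) := by
    have := horth (X ^ (k : ℕ)) (mem_degreeLT.mpr <| by
      rw [degree_X_pow]; exact_mod_cast k.isLt)
    simp only [eval_pow, eval_X, sub_mul] at this
    rw [intervalIntegral.integral_sub] at this
    · linarith
    · exact (hg.mul (by fun_prop)).intervalIntegrable_of_Icc zero_le_one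
    · exact (by fun_prop : Continuous _).intervalIntegrable _ _
  have hbound := intervalIntegral.norm_integral_le_of_norm_le_const (a := 0) (b := 1) (C := M)
    (f := fun s => g s * s ^ (k : ℕ)) fun s hs => ?_
  · simpa [hmoment] using hbound
  rw [uIoc_of_le zero_le_one] at hs
  rw [Real.norm_eq_abs, abs_mul, abs_pow]
  calc |g s| * |s| ^ (k : ℕ) ≤ M * 1 := by
        gcongr
        · exact hM s (Ioc_subset_Icc_self hs)
        · exact pow_le_one₀ (abs_nonneg s) (abs_le.mpr ⟨by linarith [hs.1], hs.2⟩)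
    _ = M := mul_one M

theorem integral_comp_affine_mul_eval_eq_zero {g : ℝ → ℝ} {a b : ℝ} (hab : a ≠ b) {n : ℕ}
    (horth : ∀ R ∈ degreeLT ℝ n, ∫ t in a..b, g t * R.eval t = 0) {S : ℝ[X]}
    (hS : S ∈ degreeLT ℝ n) : ∫ s in (0 : ℝ)..1, g ((b - a) * s + a) * S.eval s = 0 := by
  have hd : b - a ≠ 0 := sub_ne_zero.mpr hab.symm
  set ψ : ℝ[X] := C (b - a)⁻¹ * X + C (-(b - a)⁻¹ * a)
  have hψ (s : ℝ) : ψ.eval ((b - a) * s + a) = s := by simp [ψ]; field_simp; ring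
  have hpull := intervalIntegral.integral_comp_mul_add (a := 0) (b := 1)
    (fun t => g t * (S.comp ψ).eval t) hd a
  simp only [mul_zero, zero_add, mul_one, sub_add_cancel, eval_comp, hψ] at hpull
  rw [hpull, ← smul_zero (b - a)⁻¹, ← horth (S.comp ψ) (comp_mem_degreeLT hS natDegree_linear_le)]
  simp only [eval_comp]

theorem exists_abs_eval_le_of_interpolating_orthogonal (q : ℕ) :
    ∃ C > 0, ∀ a b : ℝ, a < b → ∀ f : ℝ → ℝ, ContinuousOn f (Icc a b) → ∀ M : ℝ,
      (∀ t ∈ Icc a b, |f t| ≤ M) → ∀ P ∈ degreeLT ℝ (q + 1), P.eval a = f a → P.eval b = f b →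
      (∀ R ∈ degreeLT ℝ (q - 1), ∫ t in a..b, (f t - P.eval t) * R.eval t = 0) →
      ∀ t ∈ Icc a b, |P.eval t| ≤ C * M := by
  obtain ⟨K, hK, hbound⟩ := exists_abs_eval_le_mul_norm_azizMonkDofs q
  refine ⟨K, hK, fun a b hab f hf M hM P hP ha hb horth t ht => ?_⟩
  have hd : 0 < b - a := sub_pos.mpr hab
  set φ : ℝ[X] := C (b - a) * X + C a
  have hφ (s : ℝ) : φ.eval s = (b - a) * s + a := by simp [φ]
  have hφI : MapsTo (fun s => φ.eval s) (Icc 0 1) (Icc a b) := fun s hs => by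
    simp only [hφ, mem_Icc]; constructor <;> nlinarith [hs.1, hs.2]
  have hdofs : ‖azizMonkDofs q (P.comp φ)‖ ≤ M := by
    refine norm_azizMonkDofs_le (g := fun s => f (φ.eval s))
      (hf.comp φ.continuous.continuousOn hφI) (fun s hs => hM _ (hφI hs))
      (by simp [φ, ha]) (by simp [φ, hb]) fun R hR => ?_
    simpa only [eval_comp, hφ] using integral_comp_affine_mul_eval_eq_zero hab.ne horth hR
  obtain ⟨s, hs, rfl⟩ : ∃ s ∈ Icc (0 : ℝ) 1, φ.eval s = t := by
    refine ⟨(t - a) / (b - a), ⟨?_, ?_⟩, ?_⟩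
    · exact div_nonneg (by linarith [ht.1]) hd.le
    · exact (div_le_one hd).mpr (by linarith [ht.2])
    · rw [hφ]; field_simp; ring
  calc |P.eval (φ.eval s)| = |(P.comp φ).eval s| := by rw [eval_comp]
    _ ≤ K * ‖azizMonkDofs q (P.comp φ)‖ :=
      hbound _ (comp_mem_degreeLT hP natDegree_linear_le) s hs
    _ ≤ K * M := by gcongr

theorem IsPolyDegLE.exists_mem_degreeLT {H : Type*} [AddCommGroup H] [Module ℝ H] {q : ℕ}
    {p : ℝ → H} (hp : IsPolyDegLE H q p) (ℓ : H →ₗ[ℝ] ℝ) :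
    ∃ P ∈ degreeLT ℝ (q + 1), ∀ t, ℓ (p t) = P.eval t := by
  obtain ⟨c, hc⟩ := hp
  set P := (degreeLTEquiv ℝ (q + 1)).symm fun i => ℓ (c i)
  refine ⟨P, P.2, fun t => ?_⟩
  rw [eval_eq_sum_degreeLTEquiv P.2, Subtype.coe_eta, LinearEquiv.apply_symm_apply, hc, map_sum]
  simp [mul_comm]

theorem isPolyDegLT_eval_smul {H : Type*} [AddCommGroup H] [Module ℝ H] {n : ℕ} {R : ℝ[X]}
    (hR : R ∈ degreeLT ℝ n) (e : H) : IsPolyDegLT H n fun t => R.eval t • e :=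
  ⟨fun i => degreeLTEquiv ℝ n ⟨R, hR⟩ i • e, fun t => by
    simp [eval_eq_sum_degreeLTEquiv hR, Finset.sum_smul, smul_smul, mul_comm]⟩

theorem exists_norm_le_one_inner_eq_norm {H : Type*} [NormedAddCommGroup H]
    [InnerProductSpace ℝ H] (x : H) : ∃ e : H, ‖e‖ ≤ 1 ∧ ⟪e, x⟫ = ‖x‖ := by
  rcases eq_or_ne x 0 with rfl | hx
  · exact ⟨0, by simp⟩
  refine ⟨‖x‖⁻¹ • x, by simp [norm_smul, hx], ?_⟩
  rw [real_inner_smul_left, real_inner_self_eq_norm_sq]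
  field_simp

theorem aziz_monk_projection_stability_general (H : Type*) [NormedAddCommGroup H]
    [InnerProductSpace ℝ H] (q : ℕ) :
    ∃ C : ℝ, 0 < C ∧
      ∀ (a b : ℝ), a < b →
        ∀ v : ℝ → H, ContinuousOn v (Icc a b) →
          ∀ p : ℝ → H, IsPolyDegLE H q p → p a = v a → p b = v b →
            (∀ w : ℝ → H, IsPolyDegLT H (q - 1) w →
              (∫ t in a..b, ⟪v t - p t, w t⟫) = 0) →
            (⨆ t : Icc a b, ‖p (t : ℝ)‖) ≤ C * ⨆ t : Icc a b, ‖v (t : ℝ)‖ := by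
  obtain ⟨C, hC, hscalar⟩ := exists_abs_eval_le_of_interpolating_orthogonal q
  refine ⟨C, hC, fun a b hab v hv p hp hpa hpb horth => ?_⟩
  have : Nonempty (Icc a b) := (nonempty_Icc.mpr hab.le).to_subtype
  have hbdd : BddAbove (range fun t : Icc a b => ‖v t‖) := by
    simpa only [image_eq_range] using isCompact_Icc.bddAbove_image hv.norm
  refine ciSup_le fun t => ?_
  obtain ⟨e, he, hpe⟩ := exists_norm_le_one_inner_eq_norm (p t)
  obtain ⟨P, hP, hpP⟩ := hp.exists_mem_degreeLT (innerₛₗ ℝ e)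
  simp only [innerₛₗ_apply_apply] at hpP
  have hvM (s : ℝ) (hs : s ∈ Icc a b) : |⟪e, v s⟫| ≤ ⨆ t : Icc a b, ‖v t‖ :=
    calc |⟪e, v s⟫| ≤ ‖e‖ * ‖v s‖ := abs_real_inner_le_norm e (v s)
      _ ≤ ‖v s‖ := mul_le_of_le_one_left (norm_nonneg _) he
      _ ≤ ⨆ t : Icc a b, ‖v t‖ := le_ciSup hbdd ⟨s, hs⟩
  rw [← hpe, hpP]
  refine (le_abs_self _).trans (hscalar a b hab _ (continuousOn_const.inner hv) _ hvM P hP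
    (by rw [← hpP, hpa]) (by rw [← hpP, hpb]) (fun R hR => ?_) t t.2)
  rw [← horth _ (isPolyDegLT_eval_smul hR e)]
  congr with s
  rw [inner_smul_right, inner_sub_left, ← hpP, real_inner_comm (v s), real_inner_comm (p s)]
  ring

/-- **Stability of the local Aziz–Monk projection in the `L^∞` norm.** For `q ≥ 1` there
exists a constant `C > 0` depending only on `q` such that for all `a < b`, every continuous
`v : [a,b] → H`, and every polynomial `p` of degree at most `q` interpolating `v` at both
endpoints with `v − p` `L²`-orthogonal to polynomials of degree at most `q − 2`
(vacuous for `q = 1`), one has `sup_{t ∈ [a,b]} ‖p(t)‖ ≤ C sup_{t ∈ [a,b]} ‖v(t)‖`. -/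
theorem aziz_monk_projection_stability (H : Type*) [NormedAddCommGroup H]
    [InnerProductSpace ℝ H] [CompleteSpace H] (q : ℕ) (hq : 1 ≤ q) :
    ∃ C : ℝ, 0 < C ∧
      ∀ (a b : ℝ), a < b →
        ∀ v : ℝ → H, ContinuousOn v (Icc a b) →
          ∀ p : ℝ → H, IsPolyDegLE H q p → p a = v a → p b = v b →
            (∀ w : ℝ → H, IsPolyDegLT H (q - 1) w →
              (∫ t in a..b, ⟪v t - p t, w t⟫) = 0) →
            (⨆ t : Icc a b, ‖p (t : ℝ)‖) ≤ C * ⨆ t : Icc a b, ‖v (t : ℝ)‖ :=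
  aziz_monk_projection_stability_general H q
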